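/- Under the ABC token-bucket marking algorithm with per-packet accelerate fraction values f_k ∈ [0,1], token cap tokenLimit ≥ 1, and initial token 0, the total number of packets marked accelerate among the first n packets is at most ⌊∑_{k=1}^{n} f_k⌋ + 1; in particular if f_k = f for all k, at most ⌊n·f⌋ + 1 packets are marked accelerate. -/

import Mathlib

/-!
Each packet adds `f k` to the token, each accelerate mark removes `1`, and the cap at `L` only
loses tokens, so telescoping gives `token n + #marks ≤ ∑ f k`. The token never becomes negative,
hence the number of accelerate marks is even at most `⌊∑ f k⌋`.
-/

open Finset

section TokenBucket

variable {f : ℕ → ℝ} {L : ℝ} {token : ℕ → ℝ} {mark : ℕ → Bool}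

lemma card_filter_range_eq_sum (mark : ℕ → Bool) (n : ℕ) :
    (#{k ∈ range n | mark k = true} : ℝ) = ∑ k ∈ range n, if mark k then 1 else 0 := by
  rw [card_filter]
  push_cast
  rfl

lemma token_succ_add_le
    (hacc : ∀ k, mark k = true →
      1 < min (token k + f k) L ∧ token (k + 1) = min (token k + f k) L - 1)
    (hbr : ∀ k, mark k = false → token (k + 1) = min (token k + f k) L) (k : ℕ) :
    token (k + 1) + (if mark k then 1 else 0) ≤ token k + f k := by
  cases hm : mark k with
  | true =>
    simp only [(hacc k hm).2, if_true]
    linarith [min_le_left (token k + f k) L]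
  | false =>
    simp only [hbr k hm, Bool.false_eq_true, if_false]
    linarith [min_le_left (token k + f k) L]

lemma token_nonneg (hf : ∀ k, 0 ≤ f k) (hL : 0 ≤ L) (h0 : token 0 = 0)
    (hacc : ∀ k, mark k = true →
      1 < min (token k + f k) L ∧ token (k + 1) = min (token k + f k) L - 1)
    (hbr : ∀ k, mark k = false → token (k + 1) = min (token k + f k) L) (n : ℕ) :
    0 ≤ token n := by
  induction n with
  | zero => exact h0.ge
  | succ k ih =>
    cases hm : mark k with
    | true => linarith [hacc k hm]
    | false => rw [hbr k hm]; exact le_min (add_nonneg ih (hf k)) hL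

lemma token_add_card_le_sum (h0 : token 0 = 0)
    (hacc : ∀ k, mark k = true →
      1 < min (token k + f k) L ∧ token (k + 1) = min (token k + f k) L - 1)
    (hbr : ∀ k, mark k = false → token (k + 1) = min (token k + f k) L) (n : ℕ) :
    token n + #{k ∈ range n | mark k = true} ≤ ∑ k ∈ range n, f k := by
  have step : ∑ k ∈ range n, (token (k + 1) - token k + if mark k then 1 else 0) ≤
      ∑ k ∈ range n, f k :=
    sum_le_sum fun k _ => by linarith [token_succ_add_le hacc hbr k]
  rw [sum_add_distrib, sum_range_sub, h0] at step
  rw [card_filter_range_eq_sum]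
  linarith

end TokenBucket

/-- Token-bucket marking: `token 0 = 0`; on packet `k` the token is updated to
`min (token k + f k) L` and, if the packet is marked accelerate, this updated
value exceeds 1 and is decremented by 1.  Then at most `⌊∑ f k⌋ + 1` of the
first `n` packets are marked accelerate; in particular if `f k = c` for all `k`,
at most `⌊n*c⌋ + 1` packets are marked accelerate. -/
theorem abc_token_bucket (f : ℕ → ℝ) (L : ℝ) (token : ℕ → ℝ) (mark : ℕ → Bool)
    (hf : ∀ k, 0 ≤ f k ∧ f k ≤ 1) (hL : 1 ≤ L)
    (h0 : token 0 = 0)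
    (hacc : ∀ k, mark k = true →
      1 < min (token k + f k) L ∧ token (k + 1) = min (token k + f k) L - 1)
    (hbr : ∀ k, mark k = false → token (k + 1) = min (token k + f k) L) :
    ∀ n : ℕ,
      (((Finset.range n).filter (fun k => mark k = true)).card : ℤ) ≤
        ⌊∑ k ∈ Finset.range n, f k⌋ + 1 ∧
      ((∀ k, f k = f 0) →
        (((Finset.range n).filter (fun k => mark k = true)).card : ℤ) ≤
          ⌊(n : ℝ) * f 0⌋ + 1) := by
  intro n
  have hcard : (#{k ∈ range n | mark k = true} : ℤ) ≤ ⌊∑ k ∈ range n, f k⌋ := by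
    rw [Int.le_floor]
    push_cast
    linarith [token_add_card_le_sum h0 hacc hbr n,
      token_nonneg (fun k => (hf k).1) (by linarith) h0 hacc hbr n]
  refine ⟨by omega, fun hconst => ?_⟩
  have hsum : ∑ k ∈ range n, f k = n * f 0 := by
    rw [sum_congr rfl fun k _ => hconst k, sum_const, card_range, nsmul_eq_mul]
  rw [← hsum]
  omega
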